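/- arXiv:2203.11384 — 2 statements merged into one kernel-verified Lean document; each statement's English description precedes it below -/
import Mathlib

section
/- Let G be a connected (n,k,λ,μ)-strongly regular graph on vertex set V that is not complete (there exist two distinct non-adjacent vertices) and is not a complete bipartite graph K_{m,m} (equivalently, it is not the case that both λ = 0 and μ = k). Then the exponent of the critical group K(G) (the least positive integer N such that N·x = 0 for all x in K(G)) is exactly n·μ. -/
open Finset

/-- The subgroup of integer vectors whose coordinates sum to zero. -/
def sumZero (V : Type*) [Fintype V] : AddSubgroup (V → ℤ) where
  carrier := {x | ∑ v, x v = 0}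
  add_mem' {a b} ha hb := by
    simp only [Set.mem_setOf_eq] at *
    simp [Finset.sum_add_distrib, ha, hb]
  zero_mem' := by simp
  neg_mem' {a} ha := by
    simp only [Set.mem_setOf_eq] at *
    simp [ha]

/-- The ℤ-span of the rows of an integer matrix, as an additive subgroup of `V → ℤ`. -/
def rowSpan {V : Type*} [Fintype V] (L : Matrix V V ℤ) : AddSubgroup (V → ℤ) :=
  (Submodule.span ℤ (Set.range fun w => L w)).toAddSubgroup

/-- The critical group of a graph: the quotient of the sum-zero vectors by the
row span of the Laplacian. -/
def critGroup {V : Type*} [Fintype V] [DecidableEq V] (G : SimpleGraph V)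
    [DecidableRel G.Adj] :=
  sumZero V ⧸ (rowSpan (G.lapMatrix ℤ)).addSubgroupOf (sumZero V)

noncomputable instance {V : Type*} [Fintype V] [DecidableEq V] (G : SimpleGraph V)
    [DecidableRel G.Adj] : AddCommGroup (critGroup G) :=
  QuotientAddGroup.Quotient.addCommGroup _

/-!
For an `(n, k, λ, μ)` graph, `A² = kI + λA + μ(J - I - A)` turns into
`L² = (2k + μ - λ) L - nμ I + μ J` for the Laplacian `L = kI - A`. Since `J` kills sum-zero
vectors, `nμ x = L ((2k + μ - λ) x - L x)` for every such `x`, so the exponent divides `nμ`.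
Conversely, if `N (e_u - e_v) = L y`, the same identity applied to `y` shows that `nμ y` and
`N ((k + μ - λ) x + A x)` differ by a constant vector, so `nμ` divides `N` times any difference of
two coordinates of the latter. Connectedness and non-completeness force `μ > 0`, and suitable
vertices make such differences equal to `1`: a neighbour of `u` outside `N(v)` together with a
common neighbour of `u, v` if `μ < k`, and, if `μ = k` (so `λ > 0`), two differences `k + μ - λ`
and `k + μ - λ - 1` coming from a non-adjacent and an adjacent pair.
-/

open Matrix SimpleGraph

theorem AddSubgroup.exponent_quotient_addSubgroupOf_dvd_iff {A : Type*} [AddCommGroup A]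
    (H K : AddSubgroup A) {N : ℕ} :
    AddMonoid.exponent (H ⧸ K.addSubgroupOf H) ∣ N ↔ ∀ x ∈ H, N • x ∈ K := by
  rw [AddMonoid.exponent_dvd_iff_forall_nsmul_eq_zero, QuotientAddGroup.mk_surjective.forall]
  simp only [← QuotientAddGroup.mk_nsmul, QuotientAddGroup.eq_zero_iff,
    AddSubgroup.mem_addSubgroupOf, AddSubgroup.coe_nsmul, Subtype.forall]

section

variable {V : Type*} [Fintype V]

theorem mem_rowSpan_iff {L : Matrix V V ℤ} {x : V → ℤ} : x ∈ rowSpan L ↔ ∃ y, y ᵥ* L = x := by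
  simp only [rowSpan, Submodule.mem_toAddSubgroup, Submodule.mem_span_range_iff_exists_fun,
    vecMul_eq_sum]

theorem Matrix.IsSymm.mem_rowSpan_iff {L : Matrix V V ℤ} (hL : L.IsSymm) {x : V → ℤ} :
    x ∈ rowSpan L ↔ ∃ y, L *ᵥ y = x := by
  simp only [_root_.mem_rowSpan_iff, ← vecMul_transpose, hL.eq]

theorem exponent_critGroup_dvd_iff [DecidableEq V] (G : SimpleGraph V) [DecidableRel G.Adj]
    {N : ℕ} : AddMonoid.exponent (critGroup G) ∣ N ↔
      ∀ x ∈ sumZero V, ∃ y, G.lapMatrix ℤ *ᵥ y = (N : ℤ) • x := by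
  simp only [critGroup, AddSubgroup.exponent_quotient_addSubgroupOf_dvd_iff,
    (G.isSymm_lapMatrix (R := ℤ)).mem_rowSpan_iff, natCast_zsmul]

theorem Matrix.of_one_mulVec {R : Type*} [NonAssocSemiring R] (y : V → R) :
    (of fun _ _ => (1 : R) : Matrix V V R) *ᵥ y = fun _ => ∑ i, y i := by
  ext
  simp [mulVec, dotProduct]

theorem SimpleGraph.exists_adj_adj_of_card_commonNeighbors_pos {G : SimpleGraph V}
    [DecidableRel G.Adj] {u v : V} (hpos : 0 < Fintype.card (G.commonNeighbors u v)) :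
    ∃ w, G.Adj u w ∧ G.Adj v w := by
  obtain ⟨⟨w, hw⟩⟩ := Fintype.card_pos_iff.1 hpos
  exact ⟨w, hw⟩

namespace SimpleGraph.IsSRGWith

variable {G : SimpleGraph V} [DecidableRel G.Adj] {n k l μ : ℕ}

theorem mu_pos (h : G.IsSRGWith n k l μ) (hconn : G.Connected) {u v : V} (huv : u ≠ v)
    (hnadj : ¬G.Adj u v) : 0 < μ := by
  obtain ⟨p, hp⟩ := (hconn u v).exists_walk_length_eq_dist
  obtain ⟨x, a, b, hxa, hab, hxb, hne⟩ :=
    p.exists_adj_adj_not_adj_ne hp (hconn.one_lt_dist_of_ne_of_not_adj huv hnadj)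
  rw [← h.of_not_adj hne hxb]
  exact Fintype.card_pos_iff.2 ⟨⟨a, hxa, hab.symm⟩⟩

variable [DecidableEq V]

theorem lapMatrix_eq {R : Type*} [Ring R] (h : G.IsSRGWith n k l μ) :
    G.lapMatrix R = (k : R) • (1 : Matrix V V R) - G.adjMatrix R := by
  ext i j
  obtain rfl | hij := eq_or_ne i j
  · simp [lapMatrix, degMatrix, h.regular.degree_eq]
  · simp [lapMatrix, degMatrix, hij]

theorem lapMatrix_mul_self [Nonempty V] (h : G.IsSRGWith n k l μ) :
    G.lapMatrix ℤ * G.lapMatrix ℤ = ((2 * k + μ - l : ℤ)) • G.lapMatrix ℤ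
      - ((n * μ : ℤ)) • (1 : Matrix V V ℤ) + (μ : ℤ) • of (fun _ _ => (1 : ℤ)) := by
  set J : Matrix V V ℤ := of fun _ _ => 1
  have hA : G.adjMatrix ℤ * G.adjMatrix ℤ =
      (k : ℤ) • 1 + (l : ℤ) • G.adjMatrix ℤ + (μ : ℤ) • (J - 1 - G.adjMatrix ℤ) := by
    have hcompl : Gᶜ.adjMatrix ℤ = J - 1 - G.adjMatrix ℤ := by
      ext i j
      obtain rfl | hij := eq_or_ne i j
      · simp [J]
      · by_cases hadj : G.Adj i j <;> simp [J, hij, hadj]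
    simpa [← pow_two, hcompl, ← natCast_zsmul] using h.matrix_eq (α := ℤ)
  have hsq : G.lapMatrix ℤ * G.lapMatrix ℤ = ((2 * k + μ - l : ℤ)) • G.lapMatrix ℤ
      - ((k ^ 2 - k * l + k * μ - k + μ : ℤ)) • 1 + (μ : ℤ) • J := by
    rw [h.lapMatrix_eq]
    simp only [sub_mul, mul_sub, smul_mul_assoc, mul_smul_comm, one_mul, mul_one, hA]
    module
  -- the constant term: evaluate both sides on the all-ones vector, which `L` annihilates
  have hd : (k ^ 2 - k * l + k * μ - k + μ : ℤ) = n * μ := by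
    obtain ⟨v⟩ := ‹Nonempty V›
    have := congrArg (· *ᵥ fun _ => (1 : ℤ)) hsq
    simp only [← mulVec_mulVec, lapMatrix_mulVec_const_eq_zero, mulVec_zero, add_mulVec,
      sub_mulVec, smul_mulVec, one_mulVec, J, of_one_mulVec] at this
    have := congrFun this v
    simp [h.card] at this
    linarith
  rw [hsq, hd]

theorem smul_eq_lapMatrix_mulVec_add [Nonempty V] (h : G.IsSRGWith n k l μ) (y : V → ℤ) :
    (n * μ : ℤ) • y = G.lapMatrix ℤ *ᵥ ((2 * k + μ - l : ℤ) • y - G.lapMatrix ℤ *ᵥ y)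
      + fun _ => μ * ∑ i, y i := by
  rw [mulVec_sub, mulVec_mulVec, h.lapMatrix_mul_self, mulVec_smul, add_mulVec, sub_mulVec,
    smul_mulVec, smul_mulVec, smul_mulVec, one_mulVec, of_one_mulVec]
  ext v
  simp
  ring

theorem exponent_critGroup_dvd [Nonempty V] (h : G.IsSRGWith n k l μ) :
    AddMonoid.exponent (critGroup G) ∣ n * μ := by
  refine (exponent_critGroup_dvd_iff G).2 fun x hx =>
    ⟨(2 * k + μ - l : ℤ) • x - G.lapMatrix ℤ *ᵥ x, ?_⟩
  have hx : ∑ v, x v = 0 := hx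
  rw [Nat.cast_mul, h.smul_eq_lapMatrix_mulVec_add, hx]
  ext
  simp

theorem dvd_mul_of_lapMatrix_mulVec_eq [Nonempty V] (h : G.IsSRGWith n k l μ) {N : ℤ}
    {x y : V → ℤ} (hy : G.lapMatrix ℤ *ᵥ y = N • x) (w w' : V) :
    (n * μ : ℤ) ∣ N * ((k + μ - l : ℤ) • x + G.adjMatrix ℤ *ᵥ x) w
      - N * ((k + μ - l : ℤ) • x + G.adjMatrix ℤ *ᵥ x) w' := by
  have e := h.smul_eq_lapMatrix_mulVec_add y
  rw [mulVec_sub, mulVec_smul, hy, mulVec_smul, h.lapMatrix_eq, sub_mulVec, smul_mulVec,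
    one_mulVec] at e
  refine ⟨y w - y w', ?_⟩
  have ew := congrFun e w
  have ew' := congrFun e w'
  simp only [Pi.smul_apply, Pi.add_apply, Pi.sub_apply, smul_eq_mul] at ew ew' ⊢
  linear_combination ew' - ew

theorem exists_adj_not_adj_of_lt (h : G.IsSRGWith n k l μ) {u v : V} (huv : u ≠ v)
    (hnadj : ¬G.Adj u v) (hμk : μ < k) : ∃ w, G.Adj u w ∧ ¬G.Adj v w := by
  by_contra! hsub
  have hunion : G.neighborFinset u ∪ G.neighborFinset v = G.neighborFinset v :=
    Finset.union_eq_right.2 fun w hw => by simpa using hsub w (by simpa using hw)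
  have := h.card_neighborFinset_union_of_not_adj huv hnadj
  rw [hunion, card_neighborFinset_eq_degree, h.regular.degree_eq] at this
  omega

theorem dvd_exponent_critGroup_mul_sub [Nonempty V] (h : G.IsSRGWith n k l μ) (a b w w' : V) :
    let x : V → ℤ := Pi.single a 1 - Pi.single b 1
    (n * μ : ℤ) ∣ AddMonoid.exponent (critGroup G) * ((k + μ - l : ℤ) • x + G.adjMatrix ℤ *ᵥ x) w
      - AddMonoid.exponent (critGroup G) * ((k + μ - l : ℤ) • x + G.adjMatrix ℤ *ᵥ x) w' := by
  intro x
  obtain ⟨y, hy⟩ := (exponent_critGroup_dvd_iff G).1 dvd_rfl x (by simp [x, sumZero])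
  exact h.dvd_mul_of_lapMatrix_mulVec_eq hy w w'

theorem card_mul_dvd_exponent_critGroup (h : G.IsSRGWith n k l μ) (hconn : G.Connected)
    {u v : V} (huv : u ≠ v) (hnadj : ¬G.Adj u v) (hnotbip : ¬(l = 0 ∧ μ = k)) :
    n * μ ∣ AddMonoid.exponent (critGroup G) := by
  have : Nonempty V := ⟨u⟩
  set N := AddMonoid.exponent (critGroup G)
  have key := h.dvd_exponent_critGroup_mul_sub
  obtain ⟨w, hwu, hwv⟩ := exists_adj_adj_of_card_commonNeighbors_pos
    (h.of_not_adj huv hnadj ▸ h.mu_pos hconn huv hnadj)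
  suffices (n * μ : ℤ) ∣ N by exact_mod_cast this
  have hμk : μ ≤ k := by
    simpa [h.of_not_adj huv hnadj, h.regular.degree_eq] using
      G.card_commonNeighbors_le_degree_left u v
  rcases hμk.lt_or_eq with hlt | heq
  · obtain ⟨w₁, hw₁u, hw₁v⟩ := h.exists_adj_not_adj_of_lt huv hnadj hlt
    have := key u v w₁ w
    have hw₁v_ne : w₁ ≠ v := by rintro rfl; exact hnadj hw₁u
    have hw₁v_nadj : ¬G.Adj w₁ v := fun h => hw₁v h.symm
    simpa [hw₁u.ne', hw₁v_ne, hwu.ne', hwv.ne', hw₁u.symm, hw₁v_nadj, hwu.symm, hwv.symm]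
      using this
  · obtain ⟨w', hw'u, hw'w⟩ := exists_adj_adj_of_card_commonNeighbors_pos
      (h.of_adj u w hwu ▸ Nat.pos_of_ne_zero fun hl => hnotbip ⟨hl, heq⟩)
    have h1 := key u v u w
    have h2 := key u w w' u
    simp [huv, hnadj, hwu.ne', hwv.ne', hw'u.ne', hw'w.ne', hwu.symm, hwv.symm, hw'u.symm,
      hw'w.symm, hwu] at h1 h2
    rw [show (N : ℤ) = N * (k + μ - l) - N * (k + μ - l + -1) by ring]
    exact dvd_sub h1 h2

end SimpleGraph.IsSRGWith

end

theorem stmt1 {V : Type*} [Fintype V] [DecidableEq V] (G : SimpleGraph V)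
    [DecidableRel G.Adj] {n k l μ : ℕ}
    (hsrg : G.IsSRGWith n k l μ) (hconn : G.Connected)
    (hnotcomplete : ∃ x y : V, x ≠ y ∧ ¬G.Adj x y)
    (hnotbip : ¬(l = 0 ∧ μ = k)) :
    AddMonoid.exponent (critGroup G) = n * μ := by
  obtain ⟨u, v, huv, hnadj⟩ := hnotcomplete
  have : Nonempty V := ⟨u⟩
  exact Nat.dvd_antisymm hsrg.exponent_critGroup_dvd
    (hsrg.card_mul_dvd_exponent_critGroup hconn huv hnadj hnotbip)
end

section
/- Let G be an (n,k,λ,μ)-strongly regular graph on vertex set V with integer Laplacian matrix L, and let u, v be adjacent vertices. Define c : V → ℤ by c u = k + μ − λ − 1, c v = −(k + μ − λ − 1), and for w ∉ {u,v}, c w = (1 if w is adjacent to u else 0) − (1 if w is adjacent to v else 0). Then the vector-matrix product c ᵥ* L (i.e., the integer linear combination ∑_w c w · (row w of L)) equals (n·μ) • (e_u − e_v), where e_w denotes the standard basis vector supported at w. -/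
/-!
With `d = e_u - e_v` and `A` the adjacency matrix, the vector `c` is `(k + μ - λ) • d + A d`.
Since `d` is orthogonal to the all-ones vector, `J d = 0`, so the SRG equation
`A² = k I + λ A + μ (J - I - A)` gives `A² d = (k - μ) d + (λ - μ) A d`. With `L = k I - A`
the `A d` terms cancel in `L c`, leaving `(k (k + μ - λ) - k + μ) d`, and the coefficient is
`n μ` by the parameter relation `k (k - λ - 1) = (n - k - 1) μ`. Finally `c ᵥ* L = L c` as `L`
is symmetric.
-/

open Finset Matrix

namespace SimpleGraph

variable {V R : Type*} [Fintype V] (G : SimpleGraph V) [DecidableRel G.Adj]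

theorem compl_adjMatrix_mulVec_of_sum_eq_zero [DecidableEq V] [Ring R] {x : V → R}
    (hx : ∑ i, x i = 0) :
    Gᶜ.adjMatrix R *ᵥ x = -x - G.adjMatrix R *ᵥ x := by
  classical
  have hJ : Gᶜ.adjMatrix R = (of 1 : Matrix V V R) - 1 - G.adjMatrix R := by
    rw [← G.compl_adjMatrix_eq_adjMatrix_compl R,
      ← G.one_add_adjMatrix_add_compl_adjMatrix_eq_of_one R]
    abel
  have hJx : of (1 : V → V → R) *ᵥ x = 0 := by
    ext i
    simp [mulVec, dotProduct, hx]
  rw [hJ, sub_mulVec, sub_mulVec, hJx, one_mulVec, zero_sub]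

theorem adjMatrix_mulVec_single_sub_single_apply [DecidableEq V] [Ring R] (u v w : V) :
    (G.adjMatrix R *ᵥ (Pi.single u 1 - Pi.single v 1)) w =
      (if G.Adj w u then 1 else 0) - (if G.Adj w v then 1 else 0) := by
  simp

theorem IsRegularOfDegree.lapMatrix_mulVec [DecidableEq V] [Ring R] {k : ℕ}
    (h : G.IsRegularOfDegree k) (x : V → R) :
    G.lapMatrix R *ᵥ x = (k : R) • x - G.adjMatrix R *ᵥ x := by
  ext v
  simp [lapMatrix_mulVec_apply, adjMatrix_mulVec_apply, h v]

variable {G} {n k ℓ μ : ℕ}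

theorem IsSRGWith.adjMatrix_sq_mulVec_of_sum_eq_zero [DecidableEq V] [Ring R]
    (h : G.IsSRGWith n k ℓ μ) {x : V → R} (hx : ∑ i, x i = 0) :
    G.adjMatrix R *ᵥ (G.adjMatrix R *ᵥ x) =
      (k - μ : R) • x + (ℓ - μ : R) • G.adjMatrix R *ᵥ x := by
  rw [mulVec_mulVec, ← sq, h.matrix_eq, add_mulVec, add_mulVec, smul_mulVec, smul_mulVec,
    smul_mulVec, one_mulVec, G.compl_adjMatrix_mulVec_of_sum_eq_zero hx]
  simp only [sub_smul, Nat.cast_smul_eq_nsmul, smul_sub, smul_neg]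
  abel

theorem IsSRGWith.lapMatrix_mulVec_of_sum_eq_zero [DecidableEq V] [CommRing R]
    (h : G.IsSRGWith n k ℓ μ) {x : V → R} (hx : ∑ i, x i = 0) :
    G.lapMatrix R *ᵥ ((k + μ - ℓ : R) • x + G.adjMatrix R *ᵥ x) =
      ((k : R) * (k + μ - ℓ) - k + μ) • x := by
  rw [h.regular.lapMatrix_mulVec, mulVec_add, mulVec_smul,
    h.adjMatrix_sq_mulVec_of_sum_eq_zero hx]
  module

theorem IsSRGWith.param_eq_int [Nonempty V] (h : G.IsSRGWith n k ℓ μ) :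
    (k : ℤ) * (k - ℓ - 1) = (n - k - 1) * μ := by
  obtain ⟨v⟩ := ‹Nonempty V›
  have hkn : k < n := h.card ▸ h.regular v ▸ G.degree_lt_card_verts v
  have hp := h.param_eq G (by omega)
  have hnk : ((n - k - 1 : ℕ) : ℤ) = n - k - 1 := by omega
  rw [← hnk]
  rcases Nat.eq_zero_or_pos k with rfl | hk
  · rw [Nat.cast_zero, zero_mul]
    exact_mod_cast (zero_mul _).symm.trans hp
  · obtain ⟨w, hvw⟩ := (G.degree_pos_iff_exists_adj v).mp (h.regular v ▸ hk)
    have hℓk : ℓ < k := h.of_adj v w hvw ▸ h.regular v ▸ hvw.card_commonNeighbors_lt_degree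
    have hkℓ : ((k - ℓ - 1 : ℕ) : ℤ) = k - ℓ - 1 := by omega
    rw [← hkℓ]
    exact_mod_cast hp

end SimpleGraph

theorem stmt5 {V : Type*} [Fintype V] [DecidableEq V] (G : SimpleGraph V)
    [DecidableRel G.Adj] {n k l μ : ℕ} (hsrg : G.IsSRGWith n k l μ)
    (u v : V) (huv : G.Adj u v) (c : V → ℤ)
    (hcu : c u = (k : ℤ) + μ - l - 1)
    (hcv : c v = -((k : ℤ) + μ - l - 1))
    (hcw : ∀ w, w ≠ u → w ≠ v →
      c w = (if G.Adj w u then 1 else 0) - (if G.Adj w v then 1 else 0)) :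
    ∑ w, c w • (G.lapMatrix ℤ w) =
      ((n * μ : ℕ) : ℤ) • (Pi.single u 1 - Pi.single v 1) := by
  set d : V → ℤ := Pi.single u 1 - Pi.single v 1
  have hd : ∑ i, d i = 0 := by simp [d]
  have hc : c = ((k : ℤ) + μ - l) • d + G.adjMatrix ℤ *ᵥ d := by
    ext w
    rw [Pi.add_apply, Pi.smul_apply, G.adjMatrix_mulVec_single_sub_single_apply]
    by_cases hwu : w = u
    · rw [hwu, hcu, if_neg G.irrefl, if_pos huv, show d u = 1 by simp [d, huv.ne]]
      ring
    by_cases hwv : w = v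
    · rw [hwv, hcv, if_pos huv.symm, if_neg G.irrefl, show d v = -1 by simp [d, huv.ne.symm]]
      ring
    · simp [d, hcw w hwu hwv, hwu, hwv]
  have : Nonempty V := ⟨u⟩
  rw [← vecMul_eq_sum, ← (G.isSymm_lapMatrix (R := ℤ)).eq, vecMul_transpose, hc,
    hsrg.lapMatrix_mulVec_of_sum_eq_zero hd]
  congr 1
  push_cast
  linear_combination hsrg.param_eq_int
end
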